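/- Let Γ be a distance-regular graph of diameter D with intersection numbers b_i, c_i (and a_i = k − b_i − c_i where k = b_0), and let f be an eigenfunction of Γ with eigenvalue θ. Then the number of vertices on which f is nonzero is at least Σ_{i=0}^{D} |W^i_{A,θ}|, where W^0_{A,θ} = 1, W^1_{A,θ} = θ, and W^i_{A,θ} = ((θ − a_{i−1})·W^{i−1}_{A,θ} − b_{i−2}·W^{i−2}_{A,θ})/c_i for 2 ≤ i ≤ D. -/

import Mathlib

/-!
Let `x₀` be a vertex where `|f|` is maximal and let `S i` be the sum of `f` over the sphere of
radius `i` around `x₀`. Counting the edges between consecutive spheres with the intersection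
numbers turns the eigenvalue equation, summed over the sphere of radius `i`, into
`θ S i = b (i-1) S (i-1) + a i S i + c (i+1) S (i+1)`, the recurrence defining `W`; since also
`S 0 = f x₀` and `S 1 = θ f x₀`, we get `S i = W i f x₀`. As `|f| ≤ |f x₀|`, the sphere of
radius `i` contains at least `|S i| / |f x₀| = |W i|` vertices where `f` is nonzero.
-/

open scoped Classical

namespace CliqueBitrade

variable {V : Type*}

/-- `f` is an eigenfunction of the graph `G` with eigenvalue `θ`:
`f` is not identically zero and for every vertex the sum of `f` over its
neighbors equals `θ` times its value. -/
def IsEigenfunction (G : SimpleGraph V) (θ : ℝ) (f : V → ℝ) : Prop :=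
  f ≠ 0 ∧ ∀ x : V, ∑ᶠ y ∈ G.neighborSet x, f y = θ * f x

/-- `G` is regular of degree `k`. -/
def IsRegularOfDeg (G : SimpleGraph V) (k : ℕ) : Prop :=
  ∀ v : V, (G.neighborSet v).ncard = k

/-- `(G, S)` is a `(k,s,m)` pair: `G` is regular of degree `k`, `S` is a set of
`(s+1)`-cliques of `G`, and every edge of `G` lies in exactly `m` cliques of `S`. -/
def IsKSMPair (G : SimpleGraph V) (S : Set (Set V)) (k s m : ℕ) : Prop :=
  IsRegularOfDeg G k ∧
  (∀ C ∈ S, G.IsClique C ∧ C.ncard = s + 1) ∧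
  (∀ x y : V, G.Adj x y → {C ∈ S | x ∈ C ∧ y ∈ C}.ncard = m)

/-- `T` is an independent set of vertices of `G`. -/
def IsIndependent (G : SimpleGraph V) (T : Set V) : Prop :=
  ∀ x ∈ T, ∀ y ∈ T, ¬ G.Adj x y

/-- `(T₀, T₁)` is an `S`-bitrade: a pair of disjoint nonempty independent sets such
that every clique of `S` either meets each of `T₀`, `T₁` in exactly one vertex,
or meets neither. -/
def IsBitrade (G : SimpleGraph V) (S : Set (Set V)) (T₀ T₁ : Set V) : Prop :=
  Disjoint T₀ T₁ ∧ T₀.Nonempty ∧ T₁.Nonempty ∧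
  IsIndependent G T₀ ∧ IsIndependent G T₁ ∧
  ∀ C ∈ S, ((C ∩ T₀).ncard = 1 ∧ (C ∩ T₁).ncard = 1) ∨ (C ∩ T₀ = ∅ ∧ C ∩ T₁ = ∅)

/-- The function `f^T`: `1` on `T₀`, `-1` on `T₁`, `0` elsewhere. -/
noncomputable def fT (T₀ T₁ : Set V) : V → ℝ :=
  fun x => if x ∈ T₀ then 1 else if x ∈ T₁ then -1 else 0

/-- `θ` is the minimum eigenvalue of (the adjacency matrix of) `G`. -/
def IsMinEigenvalue (G : SimpleGraph V) (θ : ℝ) : Prop :=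
  (∃ f : V → ℝ, IsEigenfunction G θ f) ∧
  ∀ θ' : ℝ, (∃ f : V → ℝ, IsEigenfunction G θ' f) → θ ≤ θ'

/-- `G` is a connected distance-regular graph of diameter `D` with intersection
numbers `b i`, `c i`. -/
def IsDistRegular (G : SimpleGraph V) (D : ℕ) (b c : ℕ → ℕ) : Prop :=
  G.Connected ∧ (∀ x y : V, G.dist x y ≤ D) ∧ (∃ x y : V, G.dist x y = D) ∧
  b D = 0 ∧ c 0 = 0 ∧
  ∀ i ≤ D, ∀ x y : V, G.dist x y = i →
    {z : V | G.Adj y z ∧ G.dist x z = i + 1}.ncard = b i ∧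
    (1 ≤ i → {z : V | G.Adj y z ∧ G.dist x z = i - 1}.ncard = c i)

/-- A Delsarte clique of a graph of degree `k` with minimum eigenvalue `θmin`:
a clique with exactly `1 - k/θmin` vertices. -/
def IsDelsarteClique (G : SimpleGraph V) (k : ℕ) (θmin : ℝ) (C : Set V) : Prop :=
  G.IsClique C ∧ (C.ncard : ℝ) = 1 - (k : ℝ) / θmin

/-- The distance from the vertex `x` to the set `C`. -/
noncomputable def distToSet (G : SimpleGraph V) (C : Set V) (x : V) : ℕ :=
  sInf ((G.dist x) '' C)

/-- `C` is a completely regular set of `G` with covering radius `ρ` and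
intersection array given by `b`, `c`. -/
def IsCompletelyRegularWith (G : SimpleGraph V) (C : Set V) (ρ : ℕ) (b c : ℕ → ℕ) : Prop :=
  (∃ y : V, distToSet G C y = ρ) ∧ (∀ y : V, distToSet G C y ≤ ρ) ∧
  b ρ = 0 ∧ c 0 = 0 ∧
  ∀ i ≤ ρ, ∀ y : V, distToSet G C y = i →
    {z : V | G.Adj y z ∧ distToSet G C z = i + 1}.ncard = b i ∧
    (1 ≤ i → {z : V | G.Adj y z ∧ distToSet G C z = i - 1}.ncard = c i)

/-- `C` is a completely regular set of `G` with covering radius `ρ`. -/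
def IsCompletelyRegular (G : SimpleGraph V) (C : Set V) (ρ : ℕ) : Prop :=
  ∃ b c : ℕ → ℕ, IsCompletelyRegularWith G C ρ b c

/-- `(G, S)` is a Delsarte pair: a `(k,s,m)` pair where `G` is distance-regular
(with diameter `D`, intersection numbers `b`, `c`, minimum eigenvalue `θmin`)
and all cliques of `S` are Delsarte cliques. -/
def IsDelsartePair (G : SimpleGraph V) (S : Set (Set V)) (k s m D : ℕ)
    (b c : ℕ → ℕ) (θmin : ℝ) : Prop :=
  IsKSMPair G S k s m ∧ IsDistRegular G D b c ∧ IsMinEigenvalue G θmin ∧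
  ∀ C ∈ S, IsDelsarteClique G k θmin C

/-- The weight-distribution coefficients `W i = W^i_{A,θ}` determined by the
intersection array of a distance-regular graph of degree `k` and an eigenvalue `θ`. -/
def IsWDCoeffs (k : ℕ) (b c : ℕ → ℕ) (θ : ℝ) (D : ℕ) (W : ℕ → ℝ) : Prop :=
  W 0 = 1 ∧ W 1 = θ ∧
  ∀ i : ℕ, 2 ≤ i → i ≤ D →
    W i = ((θ - ((k : ℝ) - b (i - 1) - c (i - 1))) * W (i - 1) - (b (i - 2) : ℝ) * W (i - 2)) / (c i : ℝ)

end CliqueBitrade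

open Finset

theorem Finset.abs_sum_le_card_filter_ne_zero_mul {ι R : Type*} [Ring R] [LinearOrder R]
    [IsOrderedRing R] {s : Finset ι} {f : ι → R} {M : R} (hM : ∀ i ∈ s, |f i| ≤ M) :
    |∑ i ∈ s, f i| ≤ #{i ∈ s | f i ≠ 0} * M := by
  calc |∑ i ∈ s, f i| = |∑ i ∈ s with f i ≠ 0, f i| := by rw [Finset.sum_filter_ne_zero]
    _ ≤ ∑ i ∈ s with f i ≠ 0, |f i| := Finset.abs_sum_le_sum_abs _ _
    _ ≤ ∑ i ∈ s with f i ≠ 0, M :=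
        Finset.sum_le_sum fun i hi => hM i (Finset.mem_filter.1 hi).1
    _ = #{i ∈ s | f i ≠ 0} * M := by rw [Finset.sum_const, nsmul_eq_mul]

namespace SimpleGraph

variable {V : Type*} {G : SimpleGraph V}

theorem exists_adj_dist_eq_of_dist_eq_add_one {u v : V} {n : ℕ} (h : G.dist u v = n + 1) :
    ∃ w, G.Adj v w ∧ G.dist u w = n := by
  have hr : G.Reachable v u := (Reachable.of_dist_ne_zero (by omega : G.dist u v ≠ 0)).symm
  obtain ⟨p, hp⟩ := hr.exists_walk_length_eq_dist
  rw [dist_comm, h] at hp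
  cases p with
  | nil => simp at hp
  | @cons _ w _ hadj q =>
    have hq : G.dist u w ≤ n := by
      rw [dist_comm]
      simp only [Walk.length_cons, add_left_inj] at hp
      exact hp ▸ dist_le q
    refine ⟨w, hadj, ?_⟩
    have := hadj.diff_dist_adj (u := u)
    omega

theorem exists_dist_eq_of_le {u v : V} {m n : ℕ} (h : G.dist u v = n) (hm : m ≤ n) :
    ∃ w, G.dist u w = m := by
  induction n generalizing v with
  | zero => exact ⟨v, by omega⟩
  | succ n ih =>
    rcases hm.eq_or_lt with rfl | hlt
    · exact ⟨v, h⟩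
    · obtain ⟨w, -, hw⟩ := exists_adj_dist_eq_of_dist_eq_add_one h
      exact ih hw (by omega)

theorem sum_sum_adj_eq_mul_sum {R : Type*} [Semiring R] {s t : Finset V} {p : R}
    (hp : ∀ z ∈ t, (#{y ∈ s | G.Adj z y} : R) = p) (f : V → R) :
    ∑ y ∈ s, ∑ z ∈ t with G.Adj y z, f z = p * ∑ z ∈ t, f z := by
  rw [Finset.sum_comm' (t' := t) (s' := fun z => {y ∈ s | G.Adj z y})
    (fun y z => by simp [G.adj_comm]; tauto), Finset.mul_sum]
  refine Finset.sum_congr rfl fun z hz => ?_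
  rw [Finset.sum_const, nsmul_eq_mul, hp z hz]

variable [Fintype V]

theorem finsum_mem_neighborSet_eq_sum {M : Type*} [AddCommMonoid M] (f : V → M)
    (v : V) : ∑ᶠ w ∈ G.neighborSet v, f w = ∑ w with G.Adj v w, f w := by
  rw [← finsum_mem_coe_finset]
  congr
  ext
  simp

theorem ncard_neighborSet_eq_card (v : V) :
    (G.neighborSet v).ncard = #{w | G.Adj v w} := by
  rw [← Set.ncard_coe_finset]
  congr
  ext
  simp

noncomputable def sphere (G : SimpleGraph V) (x : V) (i : ℕ) : Finset V := {y | G.dist x y = i}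

@[simp]
theorem mem_sphere {x y : V} {i : ℕ} : y ∈ G.sphere x i ↔ G.dist x y = i := by
  simp [sphere]

theorem Connected.sphere_zero (hG : G.Connected) (x : V) : G.sphere x 0 = {x} := by
  ext y
  simp [hG.dist_eq_zero_iff, eq_comm]

theorem sphere_one (x : V) : G.sphere x 1 = ({y | G.Adj x y} : Finset V) := by
  ext y
  simp

theorem sum_card_filter_sphere {x : V} {D : ℕ} (hD : ∀ y, G.dist x y ≤ D) (p : V → Prop) :
    ∑ i ∈ Finset.range (D + 1), #{y ∈ G.sphere x i | p y} = #{y | p y} := by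
  rw [Finset.card_eq_sum_card_fiberwise (f := G.dist x) (t := Finset.range (D + 1))
    fun y _ => by simpa [Nat.lt_succ_iff] using hD y]
  refine Finset.sum_congr rfl fun i _ => congrArg _ ?_
  ext y
  simp [and_comm]

theorem sum_adj_eq_sum_adj_sphere_add {M : Type*} [AddCommMonoid M] (f : V → M) {x y : V}
    {i : ℕ} (hy : y ∈ G.sphere x (i + 1)) :
    ∑ w with G.Adj y w, f w = ∑ w ∈ G.sphere x i with G.Adj y w, f w +
      ∑ w ∈ G.sphere x (i + 1) with G.Adj y w, f w +
      ∑ w ∈ G.sphere x (i + 2) with G.Adj y w, f w := by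
  simp only [Finset.sum_filter, sphere, ← Finset.sum_add_distrib]
  refine Finset.sum_congr rfl fun w _ => ?_
  rw [mem_sphere] at hy
  by_cases hadj : G.Adj y w
  · rcases hadj.diff_dist_adj (u := x) with h | h | h <;> rw [hy] at h <;>
      simp [hadj, h, show ¬ (i + 1 + 1 = i) by omega]
  · simp [hadj]

end SimpleGraph

namespace CliqueBitrade

open SimpleGraph

variable {V : Type*}

namespace IsDistRegular

variable [Fintype V] {G : SimpleGraph V} {D : ℕ} {b c : ℕ → ℕ}

theorem card_adj_sphere_add_one (hG : IsDistRegular G D b c) {x z : V} {j : ℕ} (hj : j ≤ D)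
    (hz : z ∈ G.sphere x j) : #{w ∈ G.sphere x (j + 1) | G.Adj z w} = b j := by
  rw [← (hG.2.2.2.2.2 j hj x z (mem_sphere.1 hz)).1, ← Set.ncard_coe_finset]
  congr
  ext
  simp [and_comm]

theorem card_adj_sphere_of_add_one (hG : IsDistRegular G D b c) {x z : V} {j : ℕ}
    (hj : j + 1 ≤ D) (hz : z ∈ G.sphere x (j + 1)) :
    #{w ∈ G.sphere x j | G.Adj z w} = c (j + 1) := by
  rw [← (hG.2.2.2.2.2 (j + 1) hj x z (mem_sphere.1 hz)).2 (by omega), ← Set.ncard_coe_finset]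
  congr
  ext
  simp [and_comm]

theorem card_adj_sphere_self (hG : IsDistRegular G D b c) {k : ℕ} (hreg : IsRegularOfDeg G k)
    {x z : V} {j : ℕ} (hj : j + 1 ≤ D) (hz : z ∈ G.sphere x (j + 1)) :
    (#{w ∈ G.sphere x (j + 1) | G.Adj z w} : ℝ) = k - b (j + 1) - c (j + 1) := by
  have hdeg := sum_adj_eq_sum_adj_sphere_add (fun _ => 1) hz
  simp only [← Finset.card_eq_sum_ones] at hdeg
  rw [← ncard_neighborSet_eq_card, hreg, hG.card_adj_sphere_of_add_one hj hz,
    hG.card_adj_sphere_add_one hj hz] at hdeg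
  rw [hdeg]
  push_cast
  ring

theorem c_pos (hG : IsDistRegular G D b c) {j : ℕ} (hj0 : j ≠ 0) (hj : j ≤ D) : 0 < c j := by
  obtain ⟨x, y, hxy⟩ := hG.2.2.1
  obtain ⟨z, hz⟩ := exists_dist_eq_of_le hxy hj
  obtain ⟨j, rfl⟩ := Nat.exists_eq_succ_of_ne_zero hj0
  obtain ⟨w, hzw, hw⟩ := exists_adj_dist_eq_of_dist_eq_add_one hz
  rw [← hG.card_adj_sphere_of_add_one hj (mem_sphere.2 hz)]
  exact Finset.card_pos.2 ⟨w, by simp [hzw, hw]⟩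

theorem sum_sphere_recurrence (hG : IsDistRegular G D b c) {k : ℕ} (hreg : IsRegularOfDeg G k)
    {θ : ℝ} {f : V → ℝ} (hf : ∀ y, ∑ w with G.Adj y w, f w = θ * f y) (x : V) {i : ℕ}
    (hi : i + 2 ≤ D) :
    θ * ∑ y ∈ G.sphere x (i + 1), f y = b i * ∑ y ∈ G.sphere x i, f y +
      (k - b (i + 1) - c (i + 1)) * ∑ y ∈ G.sphere x (i + 1), f y +
      c (i + 2) * ∑ y ∈ G.sphere x (i + 2), f y := by
  calc θ * ∑ y ∈ G.sphere x (i + 1), f y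
      = ∑ y ∈ G.sphere x (i + 1), ∑ w with G.Adj y w, f w := by
        rw [Finset.mul_sum]
        exact Finset.sum_congr rfl fun y _ => (hf y).symm
    _ = ∑ y ∈ G.sphere x (i + 1), (∑ w ∈ G.sphere x i with G.Adj y w, f w +
          ∑ w ∈ G.sphere x (i + 1) with G.Adj y w, f w +
          ∑ w ∈ G.sphere x (i + 2) with G.Adj y w, f w) :=
        Finset.sum_congr rfl fun y hy => sum_adj_eq_sum_adj_sphere_add f hy
    _ = _ := by
      rw [Finset.sum_add_distrib, Finset.sum_add_distrib,
        sum_sum_adj_eq_mul_sum (p := (b i : ℝ))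
          (fun z hz => by exact_mod_cast hG.card_adj_sphere_add_one (by omega) hz),
        sum_sum_adj_eq_mul_sum (fun z hz => hG.card_adj_sphere_self hreg (by omega) hz),
        sum_sum_adj_eq_mul_sum (p := (c (i + 2) : ℝ))
          (fun z hz => by exact_mod_cast hG.card_adj_sphere_of_add_one hi hz)]

theorem sum_sphere_eq_mul (hG : IsDistRegular G D b c) {k : ℕ} (hreg : IsRegularOfDeg G k)
    {θ : ℝ} {f : V → ℝ} (hf : ∀ y, ∑ w with G.Adj y w, f w = θ * f y) {W : ℕ → ℝ}
    (hW : IsWDCoeffs k b c θ D W) (x : V) :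
    ∀ i ≤ D, ∑ y ∈ G.sphere x i, f y = W i * f x := by
  obtain ⟨hW0, hW1, hWrec⟩ := hW
  refine Nat.twoStepInduction ?_ ?_ fun n ih₀ ih₁ hn => ?_
  · intro _
    rw [hG.1.sphere_zero, Finset.sum_singleton, hW0, one_mul]
  · intro _
    rw [sphere_one, hf, hW1]
  · have hrec := hG.sum_sphere_recurrence hreg hf x hn
    rw [ih₀ (by omega), ih₁ (by omega)] at hrec
    have hc : (c (n + 2) : ℝ) ≠ 0 := by exact_mod_cast (hG.c_pos (by omega) hn).ne'
    rw [hWrec (n + 2) (by omega) hn, show n + 2 - 1 = n + 1 from rfl,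
      show n + 2 - 2 = n from rfl, div_mul_eq_mul_div, eq_div_iff hc]
    linear_combination -hrec

end IsDistRegular

theorem statement12_general [Fintype V] (G : SimpleGraph V) (D k : ℕ) (b c : ℕ → ℕ)
    (hdrg : IsDistRegular G D b c) (hreg : IsRegularOfDeg G k)
    (θ : ℝ) (f : V → ℝ) (hf : IsEigenfunction G θ f)
    (W : ℕ → ℝ) (hW : IsWDCoeffs k b c θ D W) :
    ∑ i ∈ Finset.range (D + 1), |W i| ≤ ({x : V | f x ≠ 0}.ncard : ℝ) := by
  have hf' : ∀ y, ∑ w with G.Adj y w, f w = θ * f y := fun y =>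
    (finsum_mem_neighborSet_eq_sum f y).symm.trans (hf.2 y)
  obtain ⟨v, hv⟩ := Function.ne_iff.1 hf.1
  have : Nonempty V := ⟨v⟩
  obtain ⟨x, hx⟩ := Finite.exists_max fun y => |f y|
  have hfx : 0 < |f x| := (abs_pos.2 hv).trans_le (hx v)
  have hWi : ∀ i ≤ D, |W i| ≤ #{y ∈ G.sphere x i | f y ≠ 0} := fun i hi =>
    le_of_mul_le_mul_right (calc
      |W i| * |f x| = |∑ y ∈ G.sphere x i, f y| := by
        rw [hdrg.sum_sphere_eq_mul hreg hf' hW x i hi, abs_mul]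
      _ ≤ #{y ∈ G.sphere x i | f y ≠ 0} * |f x| :=
        Finset.abs_sum_le_card_filter_ne_zero_mul fun y _ => hx y) hfx
  calc ∑ i ∈ Finset.range (D + 1), |W i|
      ≤ ∑ i ∈ Finset.range (D + 1), (#{y ∈ G.sphere x i | f y ≠ 0} : ℝ) :=
        Finset.sum_le_sum fun i hi => hWi i (Nat.lt_succ_iff.1 (Finset.mem_range.1 hi))
    _ = #{y | f y ≠ 0} := by exact_mod_cast sum_card_filter_sphere (hdrg.2.1 x) (f · ≠ 0)
    _ = ({y : V | f y ≠ 0}.ncard : ℝ) := by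
        rw [← Set.ncard_coe_finset, Finset.coe_filter_univ]

/-- the weight-distribution bound: In a distance-regular graph
with intersection numbers `b`, `c` (degree `k = b 0`) and diameter `D`, any
eigenfunction `f` with eigenvalue `θ` has at least `Σ_{i=0}^{D} |W^i_{A,θ}|`
nonzeros. -/
theorem statement12 [Fintype V] (G : SimpleGraph V) (D k : ℕ) (b c : ℕ → ℕ)
    (hdrg : IsDistRegular G D b c) (hreg : IsRegularOfDeg G k) (hk : k = b 0)
    (θ : ℝ) (f : V → ℝ) (hf : IsEigenfunction G θ f)
    (W : ℕ → ℝ) (hW : IsWDCoeffs k b c θ D W) :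
    ∑ i ∈ Finset.range (D + 1), |W i| ≤ ({x : V | f x ≠ 0}.ncard : ℝ) :=
  statement12_general G D k b c hdrg hreg θ f hf W hW

end CliqueBitrade
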